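/- arXiv:2107.08066 — 3 statements merged into one kernel-verified Lean document; each statement's English description precedes it below -/
import Mathlib

section
/- Let q ≥ 2 be an integer and let p be a probability vector on Fin q with a = max i, p i. Then H(p) ≤ h̄_q(a), i.e. -∑ i, p i * log (p i) ≤ -a * log a - (1 - a) * log ((1 - a) / (q - 1)). -/
/-- `h̄_q(a) = -a log a - (1-a) log((1-a)/(q-1))`, natural log, with the
convention `0 · log 0 = 0` (Mathlib's `Real.log 0 = 0` realizes it). -/
noncomputable def hbar (q : ℕ) (a : ℝ) : ℝ :=
  -a * Real.log a - (1 - a) * Real.log ((1 - a) / ((q : ℝ) - 1))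

/-- For a probability vector `p` on `Fin q` (`q ≥ 2`) with
`a = max i, p i`, the Shannon entropy satisfies `H(p) ≤ h̄_q(a)`. -/
theorem stmt_1 (q : ℕ) (hq : 2 ≤ q) (p : Fin q → ℝ)
    (hp0 : ∀ i, 0 ≤ p i) (hp1 : ∑ i, p i = 1)
    (a : ℝ) (ha : a = Finset.univ.sup' ⟨⟨0, by omega⟩, Finset.mem_univ _⟩ p) :
    -∑ i, p i * Real.log (p i) ≤ hbar q a := by
  obtain ⟨i₀, -, hi₀⟩ := Finset.exists_mem_eq_sup' (⟨⟨0, by omega⟩, Finset.mem_univ _⟩ :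
    (Finset.univ : Finset (Fin q)).Nonempty) p
  have ha0 : a = p i₀ := by rw [ha, hi₀]
  set t : Finset (Fin q) := Finset.univ.erase i₀ with ht
  have hcard : (t.card : ℝ) = (q : ℝ) - 1 := by
    rw [ht, Finset.card_erase_of_mem (Finset.mem_univ _)]
    simp only [Finset.card_univ, Fintype.card_fin]
    push_cast [Nat.cast_sub (by omega : 1 ≤ q)]
    ring
  have hq1 : (0 : ℝ) < (q : ℝ) - 1 := by
    have : (2 : ℝ) ≤ (q : ℝ) := by exact_mod_cast hq
    linarith
  have hsumt : ∑ i ∈ t, p i = 1 - a := by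
    have := Finset.add_sum_erase Finset.univ p (Finset.mem_univ i₀)
    rw [hp1] at this
    rw [ht, ha0]; linarith
  -- Jensen on t
  have hjensen : ∑ i ∈ t, ((q : ℝ) - 1)⁻¹ • Real.negMulLog (p i) ≤
      Real.negMulLog (∑ i ∈ t, ((q : ℝ) - 1)⁻¹ • p i) := by
    apply Real.concaveOn_negMulLog.le_map_sum
    · intro i _; exact inv_nonneg.2 hq1.le
    · rw [Finset.sum_const, nsmul_eq_mul, hcard, mul_inv_cancel₀ hq1.ne']
    · intro i _; exact hp0 i
  have hsum2 : ∑ i ∈ t, ((q : ℝ) - 1)⁻¹ • p i = (1 - a) / ((q : ℝ) - 1) := by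
    simp only [smul_eq_mul]
    rw [← Finset.mul_sum, hsumt]; ring
  rw [hsum2, ← Finset.smul_sum] at hjensen
  have hkey : ∑ i ∈ t, Real.negMulLog (p i) ≤ -(1 - a) * Real.log ((1 - a) / ((q : ℝ) - 1)) := by
    have h2 := smul_le_smul_of_nonneg_left hjensen (le_of_lt hq1)
    rw [smul_smul, mul_inv_cancel₀ hq1.ne', one_smul] at h2
    refine h2.trans_eq ?_
    rw [Real.negMulLog, smul_eq_mul]
    field_simp
  have hH : -∑ i, p i * Real.log (p i) = Real.negMulLog (p i₀) +
      ∑ i ∈ t, Real.negMulLog (p i) := by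
    rw [← Finset.sum_neg_distrib]
    simp only [Real.negMulLog, neg_mul]
    exact (Finset.add_sum_erase Finset.univ _ (Finset.mem_univ i₀)).symm
  rw [ha0] at hkey
  rw [hH, hbar, ha0]
  have : Real.negMulLog (p i₀) = -(p i₀) * Real.log (p i₀) := rfl
  linarith [hkey]
end

section
/- Let q ≥ 2 be an integer. The inverse function h̄_q⁻¹ : [0, log q] → [1/q, 1] of h̄_q is decreasing and concave: for all h₁, h₂ ∈ [0, log q], if h₁ ≤ h₂ then h̄_q⁻¹(h₁) ≥ h̄_q⁻¹(h₂), and for all t ∈ [0, 1], h̄_q⁻¹(t * h₁ + (1 - t) * h₂) ≥ t * h̄_q⁻¹(h₁) + (1 - t) * h̄_q⁻¹(h₂). -/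
/-- `h̄_q⁻¹ : [0, log q] → [1/q, 1]`, the inverse of the strictly decreasing
bijection `h̄_q : [1/q, 1] → [0, log q]`. -/
noncomputable def hbarInv (q : ℕ) (h : ℝ) : ℝ :=
  Function.invFunOn (hbar q) (Set.Icc (1 / (q : ℝ)) 1) h

/-!
`h̄_q(a)` is the `q`-ary entropy of `1 - a`, so on `[1/q, 1]` it is continuous, strictly
decreasing and concave, and maps `[1/q, 1]` onto `[0, log q]`. The inverse of a strictly
decreasing concave function is decreasing and concave: if `y = t f(x₁) + (1 - t) f(x₂)` then
concavity gives `f(t x₁ + (1 - t) x₂) ≥ y`, and applying the decreasing inverse yields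
`t x₁ + (1 - t) x₂ ≤ f⁻¹(y)`.
-/

open Set Function Real

theorem StrictAntiOn.antitoneOn_invFunOn {α β : Type*} [LinearOrder α] [Preorder β] [Nonempty α]
    {f : α → β} {s : Set α} (hf : StrictAntiOn f s) :
    AntitoneOn (invFunOn f s) (f '' s) := by
  rintro _ ⟨x₁, hx₁, rfl⟩ _ ⟨x₂, hx₂, rfl⟩ hle
  rw [hf.injOn.leftInvOn_invFunOn hx₁, hf.injOn.leftInvOn_invFunOn hx₂]
  exact (hf.le_iff_ge hx₁ hx₂).1 hle

theorem StrictAntiOn.concaveOn_invFunOn {f : ℝ → ℝ} {s : Set ℝ} (hf : StrictAntiOn f s)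
    (hfc : ConcaveOn ℝ s f) (hs : Convex ℝ (f '' s)) : ConcaveOn ℝ (f '' s) (invFunOn f s) := by
  refine ⟨hs, ?_⟩
  rintro _ ⟨x₁, hx₁, rfl⟩ _ ⟨x₂, hx₂, rfl⟩ a b ha hb hab
  have hx : a • x₁ + b • x₂ ∈ s := hfc.1 hx₁ hx₂ ha hb hab
  have hy : a • f x₁ + b • f x₂ ∈ f '' s :=
    hs (mem_image_of_mem f hx₁) (mem_image_of_mem f hx₂) ha hb hab
  rw [hf.injOn.leftInvOn_invFunOn hx₁, hf.injOn.leftInvOn_invFunOn hx₂,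
    ← hf.injOn.leftInvOn_invFunOn hx]
  exact hf.antitoneOn_invFunOn hy (mem_image_of_mem f hx) (hfc.2 hx₁ hx₂ ha hb hab)

theorem hbar_eq_qaryEntropy {q : ℕ} (hq : q ≠ 1) (a : ℝ) :
    hbar q a = qaryEntropy q (1 - a) := by
  have hq₁ : (q : ℝ) - 1 ≠ 0 := sub_ne_zero.2 (by exact_mod_cast hq)
  rcases eq_or_ne a 1 with rfl | ha
  · simp [hbar]
  · rw [hbar, log_div (sub_ne_zero.2 ha.symm) hq₁, qaryEntropy, binEntropy, log_inv, log_inv]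
    push_cast [sub_sub_cancel]
    ring

theorem hbar_one (q : ℕ) : hbar q 1 = 0 := by simp [hbar]

theorem hbar_one_div {q : ℕ} (hq : q ≠ 1) : hbar q (1 / q) = log q := by
  have hq₁ : (q : ℝ) - 1 ≠ 0 := sub_ne_zero.2 (by exact_mod_cast hq)
  rcases eq_or_ne q 0 with rfl | hq₀
  · simp [hbar]
  have hdiv : (1 - 1 / (q : ℝ)) / (q - 1) = 1 / q := by field_simp
  rw [hbar, hdiv, one_div, log_inv]
  ring

theorem continuous_hbar {q : ℕ} (hq : q ≠ 1) : Continuous (hbar q) := by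
  simp only [funext (hbar_eq_qaryEntropy hq)]
  fun_prop

theorem concaveOn_hbar {q : ℕ} (hq : q ≠ 1) : ConcaveOn ℝ (Icc 0 1) (hbar q) := by
  refine ⟨convex_Icc 0 1, fun x hx y hy a b ha hb hab => ?_⟩
  have hreflect : ∀ z ∈ Icc (0 : ℝ) 1, 1 - z ∈ Icc (0 : ℝ) 1 :=
    fun z hz => ⟨by linarith [hz.2], by linarith [hz.1]⟩
  have hmix : 1 - (a • x + b • y) = a • (1 - x) + b • (1 - y) := by
    simp only [smul_eq_mul]
    linear_combination -hab
  simp only [hbar_eq_qaryEntropy hq, hmix]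
  exact strictConcaveOn_qaryEntropy.concaveOn.2 (hreflect x hx) (hreflect y hy) ha hb hab

theorem strictAntiOn_hbar {q : ℕ} (hq : 2 ≤ q) : StrictAntiOn (hbar q) (Icc (1 / q) 1) := by
  intro x hx y hy hxy
  simp only [hbar_eq_qaryEntropy (by omega : q ≠ 1)]
  exact qaryEntropy_strictMonoOn hq ⟨by linarith [hy.2], by linarith [hy.1]⟩
    ⟨by linarith [hx.2], by linarith [hx.1]⟩ (by linarith)

theorem hbar_image_Icc {q : ℕ} (hq : 2 ≤ q) : hbar q '' Icc (1 / q) 1 = Icc 0 (log q) := by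
  have hle : 1 / (q : ℝ) ≤ 1 := by
    rw [div_le_one (by positivity)]
    exact_mod_cast (by omega : 1 ≤ q)
  rw [(continuous_hbar (by omega)).continuousOn.image_Icc_of_antitoneOn hle
    (strictAntiOn_hbar hq).antitoneOn, hbar_one, hbar_one_div (by omega)]

theorem antitoneOn_hbarInv {q : ℕ} (hq : 2 ≤ q) : AntitoneOn (hbarInv q) (Icc 0 (log q)) := by
  rw [← hbar_image_Icc hq]
  exact (strictAntiOn_hbar hq).antitoneOn_invFunOn

theorem concaveOn_hbarInv {q : ℕ} (hq : 2 ≤ q) : ConcaveOn ℝ (Icc 0 (log q)) (hbarInv q) := by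
  have hconc := (strictAntiOn_hbar hq).concaveOn_invFunOn
    ((concaveOn_hbar (by omega)).subset (Icc_subset_Icc (by positivity) le_rfl) (convex_Icc _ _))
  rw [hbar_image_Icc hq] at hconc
  exact hconc (convex_Icc _ _)

/-- For every integer `q ≥ 2`, the inverse `h̄_q⁻¹` is decreasing
and concave on `[0, log q]`. -/
theorem stmt_8 (q : ℕ) (hq : 2 ≤ q) :
    ∀ h₁ ∈ Set.Icc (0 : ℝ) (Real.log q), ∀ h₂ ∈ Set.Icc (0 : ℝ) (Real.log q),
      (h₁ ≤ h₂ → hbarInv q h₂ ≤ hbarInv q h₁) ∧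
      ∀ t ∈ Set.Icc (0 : ℝ) 1,
        t * hbarInv q h₁ + (1 - t) * hbarInv q h₂ ≤
          hbarInv q (t * h₁ + (1 - t) * h₂) := by
  intro h₁ hh₁ h₂ hh₂
  refine ⟨antitoneOn_hbarInv hq hh₁ hh₂, fun t ht => ?_⟩
  simpa only [smul_eq_mul] using
    (concaveOn_hbarInv hq).2 hh₁ hh₂ ht.1 (sub_nonneg.2 ht.2) (add_sub_cancel t 1)
end

section
/- (Proposition 2, MSE part, discrete form.) Let Ω be a finite probability space and let y : Ω → ℝ, x : Ω → Fin b, z : Ω → ℝ be random variables such that y and z are conditionally independent given x. Then the generalized mean square error Var(y) * exp(-2 * I(y; z)) + (E[y - z])² satisfies Var(y) * exp(-2 * I(y; z)) + (E[y - z])² ≥ Var(y) * exp(-2 * I(y; x)), with equality when I(y; x | z) = 0 and E[y] = E[z]. (Interpretation: the lowest generalized MSE achievable by a supervised learner using x to predict y is e^{-2 I(y; x)} Var(y), achieved by the oracle unbiased learner.) -/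
/-!
Conditional independence of `y` and `z` given `x` makes `I(y; z | x)` vanish, so the chain rule
`I(y; x) + I(y; z | x) = I(y; z) + I(y; x | z)` gives `I(y; x) = I(y; z) + I(y; x | z) ≥ I(y; z)`,
the last step by Gibbs' inequality `log t ≥ 1 - 1/t`. Hence `exp (-2 I(y; x)) ≤ exp (-2 I(y; z))`,
and the squared bias `(E[y - z])²` is nonnegative; both steps are equalities when
`I(y; x | z) = 0` and `E[y] = E[z]`.
-/

/-- Expectation on a finite probability space with weights `w`. -/
noncomputable def fexp {Ω : Type*} [Fintype Ω] (w : Ω → ℝ) (f : Ω → ℝ) : ℝ :=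
  ∑ ω, w ω * f ω

/-- Variance on a finite probability space with weights `w`. -/
noncomputable def fvar {Ω : Type*} [Fintype Ω] (w : Ω → ℝ) (f : Ω → ℝ) : ℝ :=
  fexp w (fun ω => (f ω - fexp w f) ^ 2)

/-- Marginal pmf `P(u = a)` of a random variable `u` on a finite probability
space with weights `w`. -/
noncomputable def margP {Ω α : Type*} [Fintype Ω] [DecidableEq α]
    (w : Ω → ℝ) (u : Ω → α) (a : α) : ℝ :=
  ∑ ω ∈ Finset.univ.filter (fun ω => u ω = a), w ω

/-- Joint pmf `P(u = a, v = b)` of a pair of random variables. -/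
noncomputable def jointP {Ω α β : Type*} [Fintype Ω] [DecidableEq α] [DecidableEq β]
    (w : Ω → ℝ) (u : Ω → α) (v : Ω → β) (t : α × β) : ℝ :=
  ∑ ω ∈ Finset.univ.filter (fun ω => u ω = t.1 ∧ v ω = t.2), w ω

/-- Joint pmf `P(u = a, v = b, r = c)` of a triple of random variables. -/
noncomputable def joint3P {Ω α β γ : Type*} [Fintype Ω] [DecidableEq α]
    [DecidableEq β] [DecidableEq γ]
    (w : Ω → ℝ) (u : Ω → α) (v : Ω → β) (r : Ω → γ) (t : α × β × γ) : ℝ :=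
  ∑ ω ∈ Finset.univ.filter (fun ω => u ω = t.1 ∧ v ω = t.2.1 ∧ r ω = t.2.2), w ω

/-- Mutual information `I(u; v)` (in nats) of two random variables on a finite
probability space, summing over pairs of values with positive probability. -/
noncomputable def MI {Ω α β : Type*} [Fintype Ω] [DecidableEq α] [DecidableEq β]
    (w : Ω → ℝ) (u : Ω → α) (v : Ω → β) : ℝ :=
  ∑ t ∈ (Finset.univ.image (fun ω => (u ω, v ω))).filter
      (fun t => 0 < jointP w u v t),
    jointP w u v t * Real.log (jointP w u v t / (margP w u t.1 * margP w v t.2))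

/-- Conditional mutual information `I(u; v | r)` (in nats). -/
noncomputable def condMI {Ω α β γ : Type*} [Fintype Ω] [DecidableEq α]
    [DecidableEq β] [DecidableEq γ]
    (w : Ω → ℝ) (u : Ω → α) (v : Ω → β) (r : Ω → γ) : ℝ :=
  ∑ t ∈ (Finset.univ.image (fun ω => (u ω, v ω, r ω))).filter
      (fun t => 0 < joint3P w u v r t),
    joint3P w u v r t * Real.log (joint3P w u v r t * margP w r t.2.2 /
      (jointP w u r (t.1, t.2.2) * jointP w v r (t.2.1, t.2.2)))

open Finset Real

section FiniteInformation

variable {Ω α β γ : Type*} [Fintype Ω] [DecidableEq α] [DecidableEq β] [DecidableEq γ]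
  {w : Ω → ℝ}

lemma fvar_nonneg (hw0 : ∀ ω, 0 ≤ w ω) (f : Ω → ℝ) : 0 ≤ fvar w f :=
  sum_nonneg fun ω _ => mul_nonneg (hw0 ω) (sq_nonneg _)

lemma fexp_sub (f g : Ω → ℝ) : fexp w (fun ω => f ω - g ω) = fexp w f - fexp w g := by
  simp only [fexp, mul_sub, sum_sub_distrib]

lemma margP_nonneg (hw0 : ∀ ω, 0 ≤ w ω) (u : Ω → α) (a : α) : 0 ≤ margP w u a :=
  sum_nonneg fun ω _ => hw0 ω

lemma margP_pos (hw0 : ∀ ω, 0 ≤ w ω) (u : Ω → α) {ω : Ω} (hω : 0 < w ω) :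
    0 < margP w u (u ω) :=
  hω.trans_le (single_le_sum (fun ω' _ => hw0 ω') (by simp))

lemma jointP_eq_margP (u : Ω → α) (v : Ω → β) :
    jointP w u v = margP w (fun ω => (u ω, v ω)) := by
  ext t
  simp only [jointP, margP, Prod.ext_iff]

lemma joint3P_eq_margP (u : Ω → α) (v : Ω → β) (r : Ω → γ) :
    joint3P w u v r = margP w (fun ω => (u ω, v ω, r ω)) := by
  ext t
  simp only [joint3P, margP, Prod.ext_iff]

lemma jointP_swap (u : Ω → α) (v : Ω → β) (a : α) (c : β) :
    jointP w u v (a, c) = jointP w v u (c, a) := by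
  simp only [jointP, and_comm]

lemma joint3P_swap (u : Ω → α) (v : Ω → β) (r : Ω → γ) (a : α) (c : β) (d : γ) :
    joint3P w u v r (a, c, d) = joint3P w u r v (a, d, c) := by
  simp only [joint3P, and_comm]

lemma joint3P_eq_jointP_prod (u : Ω → α) (v : Ω → β) (r : Ω → γ) (a : α) (c : β) (d : γ) :
    joint3P w u v r (a, c, d) = jointP w u (fun ω => (v ω, r ω)) (a, (c, d)) := by
  simp only [joint3P, jointP, Prod.ext_iff]

lemma margP_comp_of_injective {δ : Type*} [DecidableEq δ] (u : Ω → α) {e : α → δ}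
    (he : Function.Injective e) (a : α) : margP w (e ∘ u) (e a) = margP w u a := by
  simp only [margP, Function.comp_apply, he.eq_iff]

lemma jointP_comp_right_of_injective {δ : Type*} [DecidableEq δ] (u : Ω → α) (v : Ω → β)
    {e : β → δ} (he : Function.Injective e) (a : α) (c : β) :
    jointP w u (e ∘ v) (a, e c) = jointP w u v (a, c) := by
  simp only [jointP, Function.comp_apply, he.eq_iff]

lemma sum_image_margP (u : Ω → α) : ∑ a ∈ univ.image u, margP w u a = ∑ ω, w ω :=
  sum_fiberwise_of_maps_to (fun ω _ => mem_image_of_mem u (mem_univ ω)) w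

lemma sum_image_jointP_fst (u : Ω → α) (v : Ω → β) (c : β) :
    ∑ a ∈ univ.image u, jointP w u v (a, c) = margP w v c := by
  have hfiber : ∀ a, univ.filter (fun ω => u ω = a ∧ v ω = c) =
      (univ.filter (fun ω => v ω = c)).filter (fun ω => u ω = a) := by
    intro a
    rw [filter_filter]
    simp only [and_comm]
  simp only [jointP, margP, hfiber]
  exact sum_fiberwise_of_maps_to (fun ω _ => mem_image_of_mem u (mem_univ ω)) w

lemma sum_support_margP_mul (hw0 : ∀ ω, 0 ≤ w ω) (u : Ω → α) (g : α → ℝ) :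
    ∑ a ∈ (univ.image u).filter (fun a => 0 < margP w u a), margP w u a * g a =
      ∑ ω, w ω * g (u ω) := by
  rw [sum_filter_of_ne fun a _ h => (margP_nonneg hw0 u a).lt_of_ne' (left_ne_zero_of_mul h),
    ← sum_fiberwise_of_maps_to (fun ω _ => mem_image_of_mem u (mem_univ ω))]
  refine sum_congr rfl fun a _ => ?_
  rw [margP, sum_mul]
  exact sum_congr rfl fun ω hω => by rw [(mem_filter.mp hω).2]

lemma MI_eq_sum (hw0 : ∀ ω, 0 ≤ w ω) (u : Ω → α) (v : Ω → β) :
    MI w u v = ∑ ω, w ω *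
      log (jointP w u v (u ω, v ω) / (margP w u (u ω) * margP w v (v ω))) := by
  rw [MI, jointP_eq_margP]
  exact sum_support_margP_mul hw0 (fun ω => (u ω, v ω))
    (fun t => log (margP w _ t / (margP w u t.1 * margP w v t.2)))

lemma condMI_eq_sum (hw0 : ∀ ω, 0 ≤ w ω) (u : Ω → α) (v : Ω → β) (r : Ω → γ) :
    condMI w u v r = ∑ ω, w ω * log (joint3P w u v r (u ω, v ω, r ω) * margP w r (r ω) /
      (jointP w u r (u ω, r ω) * jointP w v r (v ω, r ω))) := by
  rw [condMI, joint3P_eq_margP]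
  exact sum_support_margP_mul hw0 (fun ω => (u ω, v ω, r ω))
    (fun t => log (margP w _ t * margP w r t.2.2 /
      (jointP w u r (t.1, t.2.2) * jointP w v r (t.2.1, t.2.2))))

lemma MI_comp_right_of_injective (hw0 : ∀ ω, 0 ≤ w ω) {δ : Type*} [DecidableEq δ]
    (u : Ω → α) (v : Ω → β) {e : β → δ} (he : Function.Injective e) :
    MI w u (e ∘ v) = MI w u v := by
  simp only [MI_eq_sum hw0, Function.comp_apply]
  refine sum_congr rfl fun ω _ => ?_
  rw [jointP_comp_right_of_injective u v he, margP_comp_of_injective v he]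

lemma log_div_mul_add_log_mul_div_mul {a b c d e : ℝ} (ha : 0 < a) (hb : 0 < b) (hc : 0 < c)
    (hd : 0 < d) (he : 0 < e) :
    log (a / (b * c)) + log (e * c / (a * d)) = log (e / (b * d)) := by
  rw [← log_mul (by positivity) (by positivity)]
  congr 1
  field_simp

lemma MI_add_condMI (hw0 : ∀ ω, 0 ≤ w ω) (u : Ω → α) (v : Ω → β) (r : Ω → γ) :
    MI w u v + condMI w u r v = MI w u (fun ω => (r ω, v ω)) := by
  rw [MI_eq_sum hw0, MI_eq_sum hw0, condMI_eq_sum hw0, ← sum_add_distrib]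
  refine sum_congr rfl fun ω _ => ?_
  rcases (hw0 ω).eq_or_lt with h0 | h0
  · simp [← h0]
  rw [← mul_add, joint3P_eq_jointP_prod, jointP_eq_margP r v]
  simp only [jointP_eq_margP]
  exact congrArg _ (log_div_mul_add_log_mul_div_mul (margP_pos hw0 _ h0)
    (margP_pos hw0 _ h0) (margP_pos hw0 _ h0) (margP_pos hw0 _ h0) (margP_pos hw0 _ h0))

lemma MI_add_condMI_comm (hw0 : ∀ ω, 0 ≤ w ω) (u : Ω → α) (v : Ω → β) (r : Ω → γ) :
    MI w u v + condMI w u r v = MI w u r + condMI w u v r := by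
  rw [MI_add_condMI hw0, MI_add_condMI hw0,
    ← MI_comp_right_of_injective hw0 u (fun ω => (v ω, r ω)) Prod.swap_injective]
  rfl

/-- `y` and `z` are conditionally independent given `x`. -/
def CondIndep (w : Ω → ℝ) (y : Ω → α) (x : Ω → β) (z : Ω → γ) : Prop :=
  ∀ i j k, joint3P w y x z (i, j, k) * margP w x j = jointP w y x (i, j) * jointP w x z (j, k)

lemma condMI_eq_zero_of_condIndep {u : Ω → α} {v : Ω → β} {r : Ω → γ}
    (h : CondIndep w u r v) : condMI w u v r = 0 := by
  refine sum_eq_zero fun t _ => ?_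
  rw [joint3P_swap, h, jointP_swap v r]
  simp

/-- `P(u = a | r = d) P(v = c | r = d) P(r = d)`: the law under which `u` and `v` are
conditionally independent given `r`; `condMI w u v r` is the relative entropy of the law of
`(u, v, r)` with respect to it. -/
noncomputable def condProdP (w : Ω → ℝ) (u : Ω → α) (v : Ω → β) (r : Ω → γ) (t : α × β × γ) :
    ℝ :=
  jointP w u r (t.1, t.2.2) * jointP w v r (t.2.1, t.2.2) / margP w r t.2.2

lemma condProdP_nonneg (hw0 : ∀ ω, 0 ≤ w ω) (u : Ω → α) (v : Ω → β) (r : Ω → γ)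
    (t : α × β × γ) : 0 ≤ condProdP w u v r t := by
  simp only [condProdP, jointP_eq_margP]
  exact div_nonneg (mul_nonneg (margP_nonneg hw0 _ _) (margP_nonneg hw0 _ _))
    (margP_nonneg hw0 _ _)

lemma sum_condProdP (u : Ω → α) (v : Ω → β) (r : Ω → γ) :
    ∑ t ∈ univ.image u ×ˢ (univ.image v ×ˢ univ.image r), condProdP w u v r t = ∑ ω, w ω := by
  rw [sum_product, sum_comm, sum_product, sum_comm, ← sum_image_margP r]
  refine sum_congr rfl fun d _ => ?_
  simp only [condProdP, ← sum_div]
  rw [sum_comm, ← sum_mul_sum, sum_image_jointP_fst, sum_image_jointP_fst, mul_self_div_self]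

lemma condMI_nonneg (hw0 : ∀ ω, 0 ≤ w ω) (u : Ω → α) (v : Ω → β) (r : Ω → γ) :
    0 ≤ condMI w u v r := by
  have hgibbs : ∑ ω, w ω * (1 - condProdP w u v r (u ω, v ω, r ω) /
      joint3P w u v r (u ω, v ω, r ω)) ≤ condMI w u v r := by
    rw [condMI_eq_sum hw0]
    refine sum_le_sum fun ω _ => ?_
    rcases (hw0 ω).eq_or_lt with h0 | h0
    · simp [← h0]
    refine mul_le_mul_of_nonneg_left ?_ h0.le
    have hx : 0 < joint3P w u v r (u ω, v ω, r ω) * margP w r (r ω) /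
        (jointP w u r (u ω, r ω) * jointP w v r (v ω, r ω)) := by
      simp only [joint3P_eq_margP, jointP_eq_margP]
      exact div_pos (mul_pos (margP_pos hw0 _ h0) (margP_pos hw0 _ h0))
        (mul_pos (margP_pos hw0 _ h0) (margP_pos hw0 _ h0))
    refine le_of_eq ?_ |>.trans (one_sub_inv_le_log_of_pos hx)
    dsimp only [condProdP]
    rw [inv_div, div_div, mul_comm (margP w r (r ω))]
  have hmass : ∑ ω, w ω * (condProdP w u v r (u ω, v ω, r ω) /
      joint3P w u v r (u ω, v ω, r ω)) ≤ ∑ ω, w ω := by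
    rw [joint3P_eq_margP, ← sum_support_margP_mul hw0 _
      (fun t => condProdP w u v r t / margP w (fun ω => (u ω, v ω, r ω)) t),
      ← sum_condProdP u v r]
    calc _ = ∑ t ∈ (univ.image fun ω => (u ω, v ω, r ω)).filter
            (fun t => 0 < margP w (fun ω => (u ω, v ω, r ω)) t), condProdP w u v r t :=
          sum_congr rfl fun t ht => mul_div_cancel₀ _ (mem_filter.mp ht).2.ne'
      _ ≤ _ := by
        refine sum_le_sum_of_subset_of_nonneg (fun t ht => ?_)
          fun t _ _ => condProdP_nonneg hw0 u v r t
        obtain ⟨ω, -, rfl⟩ := mem_image.mp (mem_filter.mp ht).1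
        simp
  simp only [mul_sub, mul_one, sum_sub_distrib] at hgibbs
  linarith

end FiniteInformation

theorem stmt_16_general {Ω : Type*} [Fintype Ω] (b : ℕ)
    (w : Ω → ℝ) (hw0 : ∀ ω, 0 ≤ w ω)
    (y : Ω → ℝ) (x : Ω → Fin b) (z : Ω → ℝ)
    (hci : ∀ (i : ℝ) (j : Fin b) (k : ℝ),
      joint3P w y x z (i, j, k) * margP w x j =
        jointP w y x (i, j) * jointP w x z (j, k)) :
    fvar w y * Real.exp (-2 * MI w y x) ≤
      fvar w y * Real.exp (-2 * MI w y z) + (fexp w (fun ω => y ω - z ω)) ^ 2 ∧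
    (condMI w y x z = 0 ∧ fexp w y = fexp w z →
      fvar w y * Real.exp (-2 * MI w y z) + (fexp w (fun ω => y ω - z ω)) ^ 2 =
        fvar w y * Real.exp (-2 * MI w y x)) := by
  have hchain : MI w y x = MI w y z + condMI w y x z := by
    simpa [condMI_eq_zero_of_condIndep (show CondIndep w y x z from hci)] using
      MI_add_condMI_comm hw0 y x z
  refine ⟨?_, fun ⟨hI, hE⟩ => ?_⟩
  · have hexp : exp (-2 * MI w y x) ≤ exp (-2 * MI w y z) :=
      exp_le_exp.mpr (by linarith [condMI_nonneg hw0 y x z])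
    nlinarith [mul_le_mul_of_nonneg_left hexp (fvar_nonneg hw0 y),
      sq_nonneg (fexp w (fun ω => y ω - z ω))]
  · rw [hchain, hI, add_zero, fexp_sub, hE, sub_self]
    ring

/-- Proposition 2, MSE part, discrete form: on a finite
probability space, if `y` and `z` are conditionally independent given `x`,
then the generalized MSE `Var(y) exp(-2 I(y; z)) + (E[y - z])²` is at least
`Var(y) exp(-2 I(y; x))`, with equality when `I(y; x | z) = 0` and
`E[y] = E[z]`. -/
theorem stmt_16 {Ω : Type*} [Fintype Ω] (b : ℕ)
    (w : Ω → ℝ) (hw0 : ∀ ω, 0 ≤ w ω) (hw1 : ∑ ω, w ω = 1)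
    (y : Ω → ℝ) (x : Ω → Fin b) (z : Ω → ℝ)
    (hci : ∀ (i : ℝ) (j : Fin b) (k : ℝ),
      joint3P w y x z (i, j, k) * margP w x j =
        jointP w y x (i, j) * jointP w x z (j, k)) :
    fvar w y * Real.exp (-2 * MI w y x) ≤
      fvar w y * Real.exp (-2 * MI w y z) + (fexp w (fun ω => y ω - z ω)) ^ 2 ∧
    (condMI w y x z = 0 ∧ fexp w y = fexp w z →
      fvar w y * Real.exp (-2 * MI w y z) + (fexp w (fun ω => y ω - z ω)) ^ 2 =
        fvar w y * Real.exp (-2 * MI w y x)) :=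
  stmt_16_general b w hw0 y x z hci
end
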